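/- Let G be a reflexive digraph and D a non-contractible reflexive digraph cycle. Then any non-refinable edge φφ' of Hom(G,D) is either an up edge or a down edge. -/

import Mathlib

open scoped Classical

namespace Recon

/-- Orientation letters for edges of a digraph cycle: `+`, `-`, `*`. -/
inductive Orient : Type
  | plus
  | minus
  | star
deriving DecidableEq

/-- A forward arc is allowed along an edge with this orientation letter. -/
def Orient.fwd : Orient → Prop
  | Orient.plus => True
  | Orient.minus => False
  | Orient.star => True

/-- A backward arc is allowed along an edge with this orientation letter. -/
def Orient.bwd : Orient → Prop
  | Orient.plus => False
  | Orient.minus => True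
  | Orient.star => True

/-- The arc relation of the reflexive digraph cycle on `ZMod m` whose orientation
string is `f`, where `f c` is the orientation of the edge from `c` to `c + 1`. -/
def cycRel {m : ℕ} (f : ZMod m → Orient) (u v : ZMod m) : Prop :=
  u = v ∨ (v = u + 1 ∧ (f u).fwd) ∨ (u = v + 1 ∧ (f v).bwd)

/-- `φ` is a digraph homomorphism. -/
def IsHom {α β : Type*} (rG : α → α → Prop) (rH : β → β → Prop) (φ : α → β) : Prop :=
  ∀ u v, rG u v → rH (φ u) (φ v)

/-- The arc relation of the Hom-graph `Hom(G,H)`. -/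
def HomArc {α β : Type*} (rG : α → α → Prop) (rH : β → β → Prop) (φ ψ : α → β) : Prop :=
  ∀ u v, rG u v → rH (φ u) (ψ v)

/-- `φψ` is an edge of the Hom-graph. -/
def HomEdge {α β : Type*} (rG : α → α → Prop) (rH : β → β → Prop) (φ ψ : α → β) : Prop :=
  HomArc rG rH φ ψ ∨ HomArc rG rH ψ φ

/-- The contribution of the edge `c (c+1)` of `C` to the increase of `φ`:
`1` if increasing, `-1` if decreasing, `0` if stationary. -/
def edgeVal {m n : ℕ} (φ : ZMod m → ZMod n) (c : ZMod m) : ℤ :=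
  if φ (c + 1) = φ c + 1 then 1 else if φ (c + 1) = φ c - 1 then -1 else 0

/-- The increase of a map between cycles: #increasing − #decreasing edges. -/
def increase {m n : ℕ} (φ : ZMod m → ZMod n) : ℤ :=
  ∑ j ∈ Finset.range m, edgeVal φ ((j : ℕ) : ZMod m)

/-- The increase of the subpath `c_a … c_{a+L}`. -/
def partialInc {m n : ℕ} (φ : ZMod m → ZMod n) (a : ZMod m) (L : ℕ) : ℤ :=
  ∑ j ∈ Finset.range L, edgeVal φ (a + ((j : ℕ) : ZMod m))

/-- `φ` has wind `w`, i.e. its increase is `w * n`. -/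
def HasWind {m n : ℕ} (φ : ZMod m → ZMod n) (w : ℤ) : Prop :=
  increase φ = w * (n : ℤ)

/-- A reflexive digraph cycle is non-contractible if it has length at least 4
or is a directed 3-cycle. -/
def NonContractible {n : ℕ} (f : ZMod n → Orient) : Prop :=
  4 ≤ n ∨ (n = 3 ∧ ((∀ i, f i = Orient.plus) ∨ (∀ i, f i = Orient.minus)))

/-- `φ` is increasing: every edge increasing or stationary, not all stationary. -/
def IncMap {m n : ℕ} (φ : ZMod m → ZMod n) : Prop :=
  (∀ c, φ (c + 1) = φ c + 1 ∨ φ (c + 1) = φ c) ∧ ∃ c, φ (c + 1) = φ c + 1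

/-- `φ` is decreasing: every edge decreasing. -/
def DecMap {m n : ℕ} (φ : ZMod m → ZMod n) : Prop :=
  ∀ c, φ (c + 1) = φ c - 1

/-- `φ` is monotone: increasing or decreasing. -/
def MonMap {m n : ℕ} (φ : ZMod m → ZMod n) : Prop :=
  IncMap φ ∨ DecMap φ

/-- `φ` is monotone in the weak sense where constant maps also count. -/
def MonOrConst {m n : ℕ} (φ : ZMod m → ZMod n) : Prop :=
  (∀ c, φ (c + 1) = φ c + 1 ∨ φ (c + 1) = φ c) ∨ DecMap φ

/-- `Y ≤* X`: `Y` is a `*`-substring of `X`, via a strictly increasing selection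
function `α` with `Y i = X (α i)` unless `Y i = *`. -/
def StarSub {p q : ℕ} (Y : Fin p → Orient) (X : Fin q → Orient) : Prop :=
  ∃ α : Fin p → Fin q, StrictMono α ∧ ∀ i, Y i = X (α i) ∨ Y i = Orient.star

/-- The orientation string of the (pointed) cycle `f`. -/
def cycStr {m : ℕ} (f : ZMod m → Orient) : Fin m → Orient :=
  fun j => f ((j : ℕ) : ZMod m)

/-- The orientation string `σ^i(Y^k)` = `(σ^i Y)^k`: the `i`-th shift of the
`k`-fold concatenation of the string of the cycle `fY`. -/
def shiftPowStr {s : ℕ} (fY : ZMod s → Orient) (k : ℕ) (i : ZMod s) :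
    Fin (k * s) → Orient :=
  fun j => fY (i + ((j : ℕ) : ZMod s))

/-- The orientation string `σ^i(Y)^k y_{i+1}` : the `i`-th shift of the `k`-fold
concatenation of the string of `fY`, extended by its own first letter. -/
def shiftPowExtStr {s : ℕ} (fY : ZMod s → Orient) (k : ℕ) (i : ZMod s) :
    Fin (k * s + 1) → Orient :=
  fun j => fY (i + ((j : ℕ) : ZMod s))

/-- Every vertex that moves from `φ` to `ψ`, moves up. -/
def MovesUpOnly {m n : ℕ} (φ ψ : ZMod m → ZMod n) : Prop :=
  ∀ c, ψ c = φ c ∨ ψ c = φ c + 1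

/-- Every vertex that moves from `φ` to `ψ`, moves down. -/
def MovesDownOnly {m n : ℕ} (φ ψ : ZMod m → ZMod n) : Prop :=
  ∀ c, ψ c = φ c ∨ ψ c = φ c - 1

/-- `φψ` is an up edge of the Hom-graph. -/
def UpEdge {m n : ℕ} (rC : ZMod m → ZMod m → Prop) (rD : ZMod n → ZMod n → Prop)
    (φ ψ : ZMod m → ZMod n) : Prop :=
  HomEdge rC rD φ ψ ∧ MovesUpOnly φ ψ

/-- `φ` and `ψ` are joined by a path (walk) inside the induced subgraph on `S`. -/
def ConnIn {m n : ℕ} (rC : ZMod m → ZMod m → Prop) (rD : ZMod n → ZMod n → Prop)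
    (S : Set (ZMod m → ZMod n)) (φ ψ : ZMod m → ZMod n) : Prop :=
  Relation.ReflTransGen (fun a b => a ∈ S ∧ b ∈ S ∧ HomEdge rC rD a b) φ ψ

/-- `ψ` is reachable from `φ` by a path of up edges inside `S`. -/
def UpReachIn {m n : ℕ} (rC : ZMod m → ZMod m → Prop) (rD : ZMod n → ZMod n → Prop)
    (S : Set (ZMod m → ZMod n)) (φ ψ : ZMod m → ZMod n) : Prop :=
  Relation.ReflTransGen (fun a b => a ∈ S ∧ b ∈ S ∧ UpEdge rC rD a b) φ ψ

/-- One step of a path of up edges between homomorphisms. -/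
def UpStep {m n : ℕ} (rC : ZMod m → ZMod m → Prop) (rD : ZMod n → ZMod n → Prop)
    (φ ψ : ZMod m → ZMod n) : Prop :=
  IsHom rC rD φ ∧ IsHom rC rD ψ ∧ UpEdge rC rD φ ψ

/-- The set of vertices on which `φ` and `φ'` differ. -/
def Neq {α β : Type*} (φ φ' : α → β) : Set α := {g | φ g ≠ φ' g}

/-- The map `φ_T`, agreeing with `φ'` on `T` and with `φ` elsewhere. -/
noncomputable def refineMap {α β : Type*} (φ φ' : α → β) (T : Set α) : α → β :=
  fun g => if g ∈ T then φ' g else φ g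

/-- The edge `φφ'` is non-refinable: no nonempty proper subset `T` of `Neq φ φ'`
yields a homomorphism `φ_T`. -/
def NonRefinable {α β : Type*} (rG : α → α → Prop) (rH : β → β → Prop)
    (φ φ' : α → β) : Prop :=
  ¬ ∃ T : Set α, T.Nonempty ∧ T ⊂ Neq φ φ' ∧ IsHom rG rH (refineMap φ φ' T)

/-- `T` is a strong component of the digraph `r`. -/
def IsStrongComponent {α : Type*} (r : α → α → Prop) (T : Set α) : Prop :=
  T.Nonempty ∧ (∀ u ∈ T, ∀ v ∈ T, Relation.ReflTransGen r u v) ∧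
    ∀ T' : Set α, T ⊆ T' → (∀ u ∈ T', ∀ v ∈ T', Relation.ReflTransGen r u v) → T' = T

/-- `T` has no arcs out to vertices not in `T`. -/
def IsTerminal {α : Type*} (r : α → α → Prop) (T : Set α) : Prop :=
  ∀ u ∈ T, ∀ v, r u v → v ∈ T

/-- `Mon_1(C,D;i)`: monotone wind-1 homomorphisms `φ` with `φ c₀ = i`. -/
def Mon1 {m n : ℕ} (fC : ZMod m → Orient) (fD : ZMod n → Orient) (i : ZMod n) :
    Set (ZMod m → ZMod n) :=
  {φ | IsHom (cycRel fC) (cycRel fD) φ ∧ MonMap φ ∧ increase φ = (n : ℤ) ∧ φ 0 = i}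

/-- A one-step up edge: an edge from `φ` obtained by moving all the vertices of a
subpath of `C` mapped to a single vertex `d` up to `d + 1`. -/
def OneStepUp {m n : ℕ} (rC : ZMod m → ZMod m → Prop) (rD : ZMod n → ZMod n → Prop)
    (φ φ' : ZMod m → ZMod n) : Prop :=
  HomEdge rC rD φ φ' ∧
    ∃ (a : ZMod m) (k : ℕ) (d : ZMod n), k < m ∧
      (∀ j : ℕ, j ≤ k → φ (a + ((j : ℕ) : ZMod m)) = d) ∧
      ∀ c, φ' c = if ∃ j : ℕ, j ≤ k ∧ c = a + ((j : ℕ) : ZMod m) then d + 1 else φ c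

/-- The number of increasing edges of `φ` among the first `j` edges of `C`. -/
def incBefore {m n : ℕ} (φ : ZMod m → ZMod n) (j : ℕ) : ℕ :=
  ((Finset.range j).filter fun t =>
    φ (((t : ℕ) : ZMod m) + 1) = φ ((t : ℕ) : ZMod m) + 1).card

/-- One cutback-pushing step: `φ'` is obtained from `φ` by replacing the values of
`φ` on a cutback `c_a … c_{a+L}` by `φ a`. -/
def CutbackStep {m n : ℕ} (φ φ' : ZMod m → ZMod n) : Prop :=
  ∃ (a : ZMod m) (L : ℕ), L < m ∧ partialInc φ a L = 0 ∧
    (∀ j : ℕ, 0 < j → j < L → partialInc φ a j < 0) ∧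
    ∀ c, φ' c = if ∃ j : ℕ, j ≤ L ∧ c = a + ((j : ℕ) : ZMod m) then φ a else φ c

/-- `Mon_1^+(C,D;i)`: wind-1 homomorphisms whose monotone push-up is in `Mon_1(C,D;i)`. -/
def Mon1Plus {m n : ℕ} (fC : ZMod m → Orient) (fD : ZMod n → Orient) (i : ZMod n) :
    Set (ZMod m → ZMod n) :=
  {φ | IsHom (cycRel fC) (cycRel fD) φ ∧ increase φ = (n : ℤ) ∧
    ∃ ψ ∈ Mon1 fC fD i, Relation.ReflTransGen CutbackStep φ ψ}

/-! Reflexivity of `G` lets every vertex move by at most one step along an edge `φ → φ'` of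
`Hom(G,D)`. If some vertex moved up and another moved down, moving only the vertices that move up
would still give a homomorphism, i.e. a refinement. The only arcs `u → v` at risk are those
where `u` moves up and `v` moves down; there `φ u → φ v`, `φ u → φ v - 1` and
`φ u + 1 → φ v - 1` force `φ v = φ u + 1` in a non-contractible cycle, since vertices at
distance two are not adjacent when `n ≥ 4`, and a directed `3`-cycle admits no such triple of
arcs. The case `φ' → φ` is the same one with the roles of `φ` and `φ'` exchanged. -/

theorem cycRel_cases {n : ℕ} (f : ZMod n → Orient) {x y : ZMod n} (h : cycRel f x y) :
    y = x ∨ y = x + 1 ∨ y = x - 1 := by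
  rcases h with h | ⟨h, _⟩ | ⟨h, _⟩
  · exact Or.inl h.symm
  · exact Or.inr (Or.inl h)
  · exact Or.inr (Or.inr (eq_sub_of_add_eq h.symm))

theorem cycRel_iff_of_forall_plus {n : ℕ} {f : ZMod n → Orient} (hf : ∀ i, f i = Orient.plus)
    {x y : ZMod n} : cycRel f x y ↔ y = x ∨ y = x + 1 := by
  simp [cycRel, hf, Orient.fwd, Orient.bwd, eq_comm]

theorem cycRel_iff_of_forall_minus {n : ℕ} {f : ZMod n → Orient} (hf : ∀ i, f i = Orient.minus)
    {x y : ZMod n} : cycRel f x y ↔ y = x ∨ x = y + 1 := by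
  simp [cycRel, hf, Orient.fwd, Orient.bwd, eq_comm]

theorem natCast_ne_zero_of_lt {n k : ℕ} (hk : 0 < k) (hkn : k < n) : (k : ZMod n) ≠ 0 :=
  fun h => absurd (Nat.le_of_dvd hk ((ZMod.natCast_eq_zero_iff k n).1 h)) (not_le.2 hkn)

theorem not_cycRel_sub_two {n : ℕ} (hn : 4 ≤ n) (f : ZMod n → Orient) (x : ZMod n) :
    ¬ cycRel f x (x - 2) := by
  have h1 : ((1 : ℕ) : ZMod n) ≠ 0 := natCast_ne_zero_of_lt (by omega) (by omega)
  have h2 : ((2 : ℕ) : ZMod n) ≠ 0 := natCast_ne_zero_of_lt (by omega) (by omega)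
  have h3 : ((3 : ℕ) : ZMod n) ≠ 0 := natCast_ne_zero_of_lt (by omega) (by omega)
  push_cast at h1 h2 h3
  intro h
  rcases cycRel_cases f h with h | h | h
  · exact h2 (by linear_combination -h)
  · exact h3 (by linear_combination -h)
  · exact h1 (by linear_combination -h)

theorem NonContractible.one_ne_zero {n : ℕ} {f : ZMod n → Orient} (hD : NonContractible f) :
    (1 : ZMod n) ≠ 0 := by
  have : Fact (1 < n) := ⟨by rcases hD with hn | ⟨rfl, _⟩ <;> omega⟩
  exact _root_.one_ne_zero

theorem NonContractible.eq_add_one_of_cycRel {n : ℕ} {f : ZMod n → Orient}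
    (hD : NonContractible f) {a b : ZMod n} (hab : cycRel f a b) (ha : cycRel f a (b - 1))
    (ha' : cycRel f (a + 1) (b - 1)) : b = a + 1 := by
  rcases hD with hn | ⟨rfl, hf | hf⟩
  · rcases cycRel_cases f hab with rfl | rfl | rfl
    · exact absurd (by rwa [show b - 1 = b + 1 - 2 by ring] at ha') (not_cycRel_sub_two hn f _)
    · rfl
    · exact absurd (by rwa [show a - 1 - 1 = a - 2 by ring] at ha) (not_cycRel_sub_two hn f a)
  · rw [cycRel_iff_of_forall_plus hf] at hab ha ha'
    revert a b
    decide
  · rw [cycRel_iff_of_forall_minus hf] at hab ha ha'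
    revert a b
    decide

theorem refineMap_sdiff {α β : Type*} (φ φ' : α → β) (T : Set α) :
    refineMap φ' φ (Neq φ φ' \ T) = refineMap φ φ' T := by
  funext g
  by_cases hg : g ∈ T
  · simp [refineMap, hg]
  · by_cases hne : φ g = φ' g <;> simp [refineMap, Neq, hg, hne]

theorem NonRefinable.symm {α β : Type*} {rG : α → α → Prop} {rH : β → β → Prop}
    {φ φ' : α → β} (h : NonRefinable rG rH φ φ') : NonRefinable rG rH φ' φ := by
  rintro ⟨T, ⟨g, hg⟩, hT, hhom⟩
  have hNeq : Neq φ' φ = Neq φ φ' := Set.ext fun _ => ne_comm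
  rw [hNeq] at hT
  refine h ⟨Neq φ φ' \ T, Set.nonempty_of_ssubset hT,
    Set.sdiff_ssubset_left_iff.2 ⟨g, hT.subset hg, hg⟩, ?_⟩
  rwa [← hNeq, refineMap_sdiff]

theorem isHom_refineMap_up {α : Type*} {rG : α → α → Prop} (hrefl : ∀ g, rG g g) {n : ℕ}
    {fD : ZMod n → Orient} (hD : NonContractible fD) {φ φ' : α → ZMod n}
    (hφ : IsHom rG (cycRel fD) φ) (hφ' : IsHom rG (cycRel fD) φ')
    (harc : HomArc rG (cycRel fD) φ φ') :
    IsHom rG (cycRel fD) (refineMap φ φ' {g | φ' g = φ g + 1}) := by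
  intro u v huv
  simp only [refineMap, Set.mem_ofPred_eq]
  split_ifs with hu hv hv
  · exact hφ' u v huv
  · rcases cycRel_cases fD (harc v v (hrefl v)) with hv' | hv' | hv'
    · rw [← hv']
      exact hφ' u v huv
    · exact absurd hv' hv
    · have := hD.eq_add_one_of_cycRel (hφ u v huv) (hv' ▸ harc u v huv)
        (hu ▸ hv' ▸ hφ' u v huv)
      rw [hu, this]
      exact Or.inl rfl
  · exact harc u v huv
  · exact hφ u v huv

theorem up_or_down_of_homArc {α : Type*} {rG : α → α → Prop} (hrefl : ∀ g, rG g g) {n : ℕ}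
    {fD : ZMod n → Orient} (hD : NonContractible fD) {φ φ' : α → ZMod n}
    (hφ : IsHom rG (cycRel fD) φ) (hφ' : IsHom rG (cycRel fD) φ')
    (harc : HomArc rG (cycRel fD) φ φ') (hnr : NonRefinable rG (cycRel fD) φ φ') :
    (∀ g, φ' g = φ g ∨ φ' g = φ g + 1) ∨ (∀ g, φ' g = φ g ∨ φ' g = φ g - 1) := by
  by_contra! ⟨⟨g₁, hg₁, hg₁'⟩, ⟨g₂, hg₂, hg₂'⟩⟩
  have hup : φ' g₂ = φ g₂ + 1 := by
    rcases cycRel_cases fD (harc g₂ g₂ (hrefl g₂)) with h | h | h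
    exacts [absurd h hg₂, h, absurd h hg₂']
  have hsub : {g | φ' g = φ g + 1} ⊆ Neq φ φ' := fun g hg h =>
    hD.one_ne_zero (by simpa [← h] using hg)
  exact hnr ⟨_, ⟨g₂, hup⟩, (Set.ssubset_iff_of_subset hsub).2 ⟨g₁, fun h => hg₁ h.symm, hg₁'⟩,
    isHom_refineMap_up hrefl hD hφ hφ' harc⟩

/-- for a reflexive digraph `G` and a non-contractible reflexive
digraph cycle `D`, any non-refinable edge of `Hom(G,D)` is an up edge or a down
edge. -/
theorem nonrefinable_up_or_down {α : Type*} (rG : α → α → Prop) (hrefl : ∀ g, rG g g)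
    (n : ℕ) (fD : ZMod n → Orient) (hD : NonContractible fD)
    (φ φ' : α → ZMod n)
    (hφ : IsHom rG (cycRel fD) φ) (hφ' : IsHom rG (cycRel fD) φ')
    (hedge : HomEdge rG (cycRel fD) φ φ')
    (hnr : NonRefinable rG (cycRel fD) φ φ') :
    (∀ g, φ' g = φ g ∨ φ' g = φ g + 1) ∨ (∀ g, φ' g = φ g ∨ φ' g = φ g - 1) := by
  rcases hedge with harc | harc
  · exact up_or_down_of_homArc hrefl hD hφ hφ' harc hnr
  · rcases up_or_down_of_homArc hrefl hD hφ' hφ harc hnr.symm with hup | hdown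
    · exact Or.inr fun g => (hup g).imp Eq.symm fun h => eq_sub_of_add_eq h.symm
    · exact Or.inl fun g => (hdown g).imp Eq.symm fun h => sub_eq_iff_eq_add.1 h.symm

end Recon
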